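/- Let $u_0<0$, and let $h:[u_0,0)\to(0,1]$, $\Omega_0:[u_0,0)\to(0,\infty)$ be differentiable with $\Omega_0$ monotonically non-increasing and satisfying $|u|\,\frac{d}{du}(\Omega_0(u)^2 h(u)) = \Omega_0(u)^2 (h(u)-1)$ on $[u_0,0)$. If $\Omega_0(u)^2 h(u)\to 0$ as $u\to 0^-$, then $\Omega_0(u)\to 0$ as $u\to 0^-$. -/

import Mathlib

open Real Set Filter Topology

/-- if `Ω₀` is non-increasing, `0 < h ≤ 1`,
`|u| (Ω₀² h)' = Ω₀² (h - 1)` on `[u₀,0)`, and `Ω₀² h → 0` as `u → 0⁻`,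
then `Ω₀ → 0` as `u → 0⁻`. -/
theorem stmt2 (u₀ : ℝ) (hu₀ : u₀ < 0) (h Ω₀ : ℝ → ℝ)
    (hh : ∀ u ∈ Ico u₀ (0:ℝ), h u ∈ Ioc (0:ℝ) 1)
    (hΩpos : ∀ u ∈ Ico u₀ (0:ℝ), 0 < Ω₀ u)
    (hmono : AntitoneOn Ω₀ (Ico u₀ 0))
    (hderiv : ∀ u ∈ Ico u₀ (0:ℝ),
      HasDerivAt (fun v => Ω₀ v ^ 2 * h v) (Ω₀ u ^ 2 * (h u - 1) / (-u)) u)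
    (hlim : Tendsto (fun u => Ω₀ u ^ 2 * h u) (nhdsWithin 0 (Iio 0)) (nhds 0)) :
    Tendsto Ω₀ (nhdsWithin 0 (Iio 0)) (nhds 0) := by
  have key : ∀ ε : ℝ, 0 < ε → ∃ u' ∈ Ico u₀ (0:ℝ), Ω₀ u' < ε := by
    intro ε hε
    by_contra hcon
    push_neg at hcon
    -- hcon : ∀ u' ∈ Ico u₀ 0, ε ≤ Ω₀ u'
    have hev : {u : ℝ | Ω₀ u ^ 2 * h u < ε ^ 2 / 2} ∈ nhdsWithin 0 (Iio (0:ℝ)) := by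
      have hb : Metric.ball (0:ℝ) (ε ^ 2 / 2) ∈ nhds (0:ℝ) :=
        Metric.ball_mem_nhds 0 (by positivity)
      filter_upwards [hlim hb] with u hu
      simp only [Set.mem_preimage, Metric.mem_ball, Real.dist_eq, sub_zero] at hu
      exact lt_of_le_of_lt (le_abs_self _) hu
    obtain ⟨l, hl, hsub⟩ := (mem_nhdsLT_iff_exists_Ioo_subset).mp hev
    have hl0 : l < 0 := hl
    set u₁ : ℝ := max l u₀ / 2 with hu₁def
    have hml : max l u₀ < 0 := max_lt hl0 hu₀
    have hu₁neg : u₁ < 0 := by rw [hu₁def]; linarith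
    have hu₁gt : max l u₀ < u₁ := by rw [hu₁def]; linarith
    have hu₁mem : u₁ ∈ Ico u₀ (0:ℝ) :=
      ⟨le_of_lt (lt_of_le_of_lt (le_max_right l u₀) hu₁gt), hu₁neg⟩
    have hhalf : ∀ u ∈ Ico u₁ (0:ℝ), h u < 1/2 := by
      intro u hu
      have humem : u ∈ Ico u₀ (0:ℝ) := ⟨le_trans hu₁mem.1 hu.1, hu.2⟩
      have hlu : u ∈ Ioo l (0:ℝ) :=
        ⟨lt_of_le_of_lt (le_max_left l u₀) (lt_of_lt_of_le hu₁gt hu.1), hu.2⟩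
      have hF : Ω₀ u ^ 2 * h u < ε ^ 2 / 2 := hsub hlu
      have hΩ : ε ≤ Ω₀ u := hcon u humem
      have hhu := hh u humem
      nlinarith [hhu.1, hhu.2]
    set D : ℝ → ℝ := fun u => Ω₀ u ^ 2 * h u - ε ^ 2 / 2 * Real.log (-u) with hDdef
    have hDderiv : ∀ u ∈ Ico u₁ (0:ℝ),
        HasDerivAt D ((Ω₀ u ^ 2 * (h u - 1) + ε ^ 2 / 2) / (-u)) u := by
      intro u hu
      have humem : u ∈ Ico u₀ (0:ℝ) := ⟨le_trans hu₁mem.1 hu.1, hu.2⟩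
      have huneg : u < 0 := hu.2
      have hu0 : u ≠ 0 := ne_of_lt huneg
      have hune : (-u) ≠ 0 := by simpa using hu0
      have hlog : HasDerivAt (fun v : ℝ => Real.log (-v)) ((-u)⁻¹ * (-1)) u :=
        (Real.hasDerivAt_log hune).comp u (hasDerivAt_neg u)
      have := (hderiv u humem).sub (hlog.const_mul (ε ^ 2 / 2))
      convert this using 1
      · rfl
      · rfl
      · rfl
      ring
    have hDnonpos : ∀ x ∈ Ico u₁ (0:ℝ),
        (Ω₀ x ^ 2 * (h x - 1) + ε ^ 2 / 2) / (-x) ≤ 0 := by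
      intro x hx
      have hxmem : x ∈ Ico u₀ (0:ℝ) := ⟨le_trans hu₁mem.1 hx.1, hx.2⟩
      have hΩ : ε ≤ Ω₀ x := hcon x hxmem
      have hhx := hhalf x hx
      have hhx' := (hh x hxmem).1
      have hnum : Ω₀ x ^ 2 * (h x - 1) + ε ^ 2 / 2 ≤ 0 := by
        have hsq : ε ^ 2 ≤ Ω₀ x ^ 2 := by nlinarith
        nlinarith [mul_nonneg (sub_nonneg.mpr hsq) (by linarith : (0:ℝ) ≤ 1 - h x)]
      have hden : (0:ℝ) ≤ -x := by linarith [hx.2]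
      exact div_nonpos_of_nonpos_of_nonneg hnum hden
    -- choose u₂ close to 0
    have hFu₁pos : 0 < Ω₀ u₁ ^ 2 * h u₁ :=
      mul_pos (pow_pos (hΩpos u₁ hu₁mem) 2) (hh u₁ hu₁mem).1
    set t : ℝ := Real.log (-u₁) - 1 - 2 * (Ω₀ u₁ ^ 2 * h u₁) / ε ^ 2 with htdef
    set u₂ : ℝ := -Real.exp t with hu₂def
    have hu₂neg : u₂ < 0 := by rw [hu₂def]; simpa using Real.exp_pos t
    have htlt : t < Real.log (-u₁) := by
      rw [htdef]
      have : 0 < 2 * (Ω₀ u₁ ^ 2 * h u₁) / ε ^ 2 := by positivity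
      linarith
    have hu₂gt : u₁ < u₂ := by
      have : Real.exp t < -u₁ := by
        calc Real.exp t < Real.exp (Real.log (-u₁)) := Real.exp_lt_exp.mpr htlt
        _ = -u₁ := Real.exp_log (by linarith : (0:ℝ) < -u₁)
      rw [hu₂def]; linarith
    have hu₂mem : u₂ ∈ Ico u₁ (0:ℝ) := ⟨le_of_lt hu₂gt, hu₂neg⟩
    have hlogu₂ : Real.log (-u₂) = t := by
      rw [hu₂def, neg_neg, Real.log_exp]
    -- antitone on Icc u₁ u₂
    have hIccsub : Icc u₁ u₂ ⊆ Ico u₁ (0:ℝ) := fun x hx => ⟨hx.1, lt_of_le_of_lt hx.2 hu₂neg⟩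
    have hanti : AntitoneOn D (Icc u₁ u₂) := by
      apply antitoneOn_of_deriv_nonpos (convex_Icc u₁ u₂)
      · intro x hx
        exact (hDderiv x (hIccsub hx)).continuousAt.continuousWithinAt
      · intro x hx
        rw [interior_Icc] at hx
        exact (hDderiv x (hIccsub (Ioo_subset_Icc_self hx))).differentiableAt.differentiableWithinAt
      · intro x hx
        rw [interior_Icc] at hx
        have hx' := hIccsub (Ioo_subset_Icc_self hx)
        rw [(hDderiv x hx').deriv]
        exact hDnonpos x hx'
    have hDle : D u₂ ≤ D u₁ :=
      hanti (left_mem_Icc.mpr (le_of_lt hu₂gt)) (right_mem_Icc.mpr (le_of_lt hu₂gt))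
        (le_of_lt hu₂gt)
    have hFu₂pos : 0 < Ω₀ u₂ ^ 2 * h u₂ := by
      have hmem : u₂ ∈ Ico u₀ (0:ℝ) := ⟨le_trans hu₁mem.1 (le_of_lt hu₂gt), hu₂neg⟩
      exact mul_pos (pow_pos (hΩpos u₂ hmem) 2) (hh u₂ hmem).1
    rw [hDdef] at hDle
    simp only [hlogu₂, htdef] at hDle
    have hεne : (ε:ℝ) ^ 2 ≠ 0 := by positivity
    -- derive contradiction
    have : ε ^ 2 / 2 * (2 * (Ω₀ u₁ ^ 2 * h u₁) / ε ^ 2) = Ω₀ u₁ ^ 2 * h u₁ := by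
      field_simp
    nlinarith [hFu₂pos, hFu₁pos, hε]
  -- conclude
  rw [Metric.tendsto_nhdsWithin_nhds]
  intro ε hε
  obtain ⟨u', hu'mem, hu'⟩ := key ε hε
  refine ⟨-u', by linarith [hu'mem.2], ?_⟩
  intro x hx hdist
  rw [Real.dist_eq, sub_zero] at hdist
  have hx0 : x < 0 := hx
  have hxgt : u' < x := by
    rw [abs_of_neg hx0] at hdist; linarith
  have hxmem : x ∈ Ico u₀ (0:ℝ) := ⟨le_trans hu'mem.1 (le_of_lt hxgt), hx0⟩
  have hle := hmono hu'mem hxmem (le_of_lt hxgt)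
  rw [Real.dist_eq, sub_zero, abs_of_pos (hΩpos x hxmem)]
  linarith
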